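/- arXiv:2012.12830 — 4 statements merged into one kernel-verified Lean document; each statement's English description precedes it below -/
import Mathlib

section
/- Completeness of the axiomatization of marginal identity atoms: for every finite set Σ ∪ {σ} of marginal identity atoms (over tuples of distinct variables), if Σ ⊨ σ, i.e., every probabilistic team (over any finite value domain) satisfying every atom of Σ also satisfies σ, then Σ ⊢ σ in the axiom system consisting of reflexivity, symmetry, projection and permutation, and transitivity. -/
namespace MI

/-- A marginal identity atom `x₁…xₙ ≈ y₁…yₙ` over the variable type `V`. -/
structure MIAtom (V : Type) : Type where
  len : ℕ
  lhs : Fin len → V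
  rhs : Fin len → V

/-- The atom is over tuples of distinct variables. -/
def MIAtom.distinct {V : Type} (σ : MIAtom V) : Prop :=
  Function.Injective σ.lhs ∧ Function.Injective σ.rhs

/-- The axiom system for marginal identity atoms: atoms of the hypothesis set,
reflexivity, symmetry, projection and permutation, and transitivity. -/
inductive Derives {V : Type} (Γ : Set (MIAtom V)) : MIAtom V → Prop
  | hyp {σ : MIAtom V} : σ ∈ Γ → Derives Γ σ
  | refl (n : ℕ) (x : Fin n → V) (hx : Function.Injective x) :
      Derives Γ ⟨n, x, x⟩
  | symm {n : ℕ} {x y : Fin n → V} :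
      Derives Γ ⟨n, x, y⟩ → Derives Γ ⟨n, y, x⟩
  | proj {n k : ℕ} {x y : Fin n → V} (f : Fin k → Fin n)
      (hf : Function.Injective f) :
      Derives Γ ⟨n, x, y⟩ → Derives Γ ⟨k, x ∘ f, y ∘ f⟩
  | trans {n : ℕ} {x y z : Fin n → V} :
      Derives Γ ⟨n, x, y⟩ → Derives Γ ⟨n, y, z⟩ → Derives Γ ⟨n, x, z⟩

/-- A probabilistic team `X` (a distribution on assignments `V → A`) satisfies the
marginal identity atom `σ` iff both tuples induce the same marginal distribution. -/
def SatisfiesMI {V A : Type} [Fintype V] [DecidableEq V] [Fintype A] [DecidableEq A]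
    (X : (V → A) → ℝ) (σ : MIAtom V) : Prop :=
  ∀ a : Fin σ.len → A,
    (∑ s : V → A, if (fun i => s (σ.lhs i)) = a then X s else 0) =
    (∑ s : V → A, if (fun i => s (σ.rhs i)) = a then X s else 0)

/-- Semantic consequence: every probabilistic team, over any finite value domain
with at least two elements, satisfying all atoms of `Γ` also satisfies `σ`. -/
def SemConseq {V : Type} [Fintype V] [DecidableEq V]
    (Γ : Set (MIAtom V)) (σ : MIAtom V) : Prop :=
  ∀ (A : Type) [Fintype A] [DecidableEq A], 2 ≤ Fintype.card A →
    ∀ X : (V → A) → ℝ, (∀ s, 0 ≤ X s) → (∑ s, X s) = 1 →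
      (∀ τ ∈ Γ, SatisfiesMI X τ) → SatisfiesMI X σ

end MI
namespace MI

section Core

variable {V : Type} [Fintype V] [DecidableEq V]

lemma derives_distinct {Γ : Set (MIAtom V)} (hGamma : ∀ τ ∈ Γ, τ.distinct)
    {τ : MIAtom V} (h : Derives Γ τ) : τ.distinct := by
  induction h with
  | hyp h => exact hGamma _ h
  | refl n x hx => exact ⟨hx, hx⟩
  | symm _ ih => exact ⟨ih.2, ih.1⟩
  | proj f hf _ ih => exact ⟨ih.1.comp hf, ih.2.comp hf⟩
  | trans _ _ ih1 ih2 => exact ⟨ih1.1, ih2.2⟩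

/-- The class of `x` : all `u` with `Γ ⊢ x ≈ u`. -/
noncomputable def Cls (Γ : Set (MIAtom V)) (n : ℕ) (x : Fin n → V) : Finset (Fin n → V) :=
  @Finset.filter _ (fun u => Derives Γ ⟨n, x, u⟩) (fun _ => Classical.propDecidable _)
    Finset.univ

lemma mem_Cls {Γ : Set (MIAtom V)} {n : ℕ} {x u : Fin n → V} :
    u ∈ Cls Γ n x ↔ Derives Γ ⟨n, x, u⟩ := by
  simp [Cls, Finset.mem_filter]

/-- The perturbation assignment attached to a tuple `u` and mask `ε`. -/
noncomputable def sfun (n : ℕ) (u : Fin n → V) (ε : Fin n → Bool) : V → Fin (n + 1) :=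
  fun v => if h : ∃ i, u i = v ∧ ε i = false then (Classical.choose h).succ else 0

def sgn (n : ℕ) (ε : Fin n → Bool) : ℝ := ∏ i, (if ε i then (-1 : ℝ) else 1)

/-- Local slot condition. -/
def Dp {k : ℕ} (n : ℕ) (t : Fin k → V) (a : Fin k → Fin (n + 1)) (u : Fin n → V)
    (i : Fin n) (b : Bool) : Prop :=
  (∀ j, a j = i.succ → (u i = t j ∧ b = false)) ∧ (∀ j, a j = 0 → u i = t j → b = true)

instance {k n : ℕ} (t : Fin k → V) (a : Fin k → Fin (n + 1)) (u : Fin n → V)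
    (i : Fin n) (b : Bool) : Decidable (Dp n t a u i b) :=
  inferInstanceAs (Decidable (_ ∧ _))

def ev {k : ℕ} (n : ℕ) (t : Fin k → V) (a : Fin k → Fin (n + 1)) (u : Fin n → V)
    (i : Fin n) : ℝ :=
  (if Dp n t a u i false then (1 : ℝ) else 0) + (if Dp n t a u i true then (-1 : ℝ) else 0)

noncomputable def Phi (Γ : Set (MIAtom V)) (n : ℕ) (x : Fin n → V) {k : ℕ}
    (t : Fin k → V) (a : Fin k → Fin (n + 1)) : ℝ :=
  ∑ u : Fin n → V, if u ∈ Cls Γ n x then ∏ i, ev n t a u i else 0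

lemma sfun_eq_succ_iff {n : ℕ} {u : Fin n → V} (hu : Function.Injective u)
    (ε : Fin n → Bool) (v : V) (i : Fin n) :
    sfun n u ε v = i.succ ↔ (u i = v ∧ ε i = false) := by
  unfold sfun
  split_ifs with h
  · constructor
    · intro he
      have hc := Classical.choose_spec h
      have : Classical.choose h = i := Fin.succ_injective _ he
      rwa [this] at hc
    · rintro ⟨h1, h2⟩
      have hc := Classical.choose_spec h
      have : Classical.choose h = i := hu (h1 ▸ hc.1)
      rw [this]
  · constructor
    · intro he; exact absurd he.symm (Fin.succ_ne_zero i)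
    · rintro ⟨h1, h2⟩; exact absurd ⟨i, h1, h2⟩ h

lemma sfun_eq_zero_iff {n : ℕ} (u : Fin n → V) (ε : Fin n → Bool) (v : V) :
    sfun n u ε v = 0 ↔ ∀ i, u i = v → ε i = true := by
  unfold sfun
  split_ifs with h
  · constructor
    · intro he; exact absurd he (Fin.succ_ne_zero _)
    · intro H
      obtain ⟨i, h1, h2⟩ := h
      have := H i h1
      rw [h2] at this
      exact absurd this (by simp)
  · constructor
    · intro _ i hiv
      by_contra hb
      exact h ⟨i, hiv, by simpa using hb⟩
    · intro _; rfl

lemma cond_iff {n k : ℕ} {u : Fin n → V} (hu : Function.Injective u)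
    (t : Fin k → V) (a : Fin k → Fin (n + 1)) (ε : Fin n → Bool) :
    (∀ j, sfun n u ε (t j) = a j) ↔ ∀ i, Dp n t a u i (ε i) := by
  constructor
  · intro H i
    constructor
    · intro j hj
      have := H j
      rw [hj] at this
      exact (sfun_eq_succ_iff hu ε (t j) i).mp this
    · intro j hj huv
      have := H j
      rw [hj] at this
      exact (sfun_eq_zero_iff u ε (t j)).mp this i huv
  · intro H j
    rcases Fin.eq_zero_or_eq_succ (a j) with h0 | ⟨i, hi⟩
    · rw [h0]
      rw [sfun_eq_zero_iff]
      intro i hiv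
      exact (H i).2 j h0 hiv
    · rw [hi]
      rw [sfun_eq_succ_iff hu]
      have := (H i).1 j hi
      exact ⟨this.1, by simpa using this.2⟩

lemma sum_pi_bool {n : ℕ} (f : Fin n → Bool → ℝ) :
    ∑ ε : Fin n → Bool, ∏ i, f i (ε i) = ∏ i, (f i false + f i true) :=
  calc ∑ ε : Fin n → Bool, ∏ i, f i (ε i) = ∏ i, ∑ b, f i b := (Fintype.prod_sum f).symm
    _ = ∏ i, (f i false + f i true) := by
        refine Finset.prod_congr rfl fun i _ => ?_
        rw [Fintype.sum_bool, add_comm]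

lemma sum_eps {n k : ℕ} (t : Fin k → V) (a : Fin k → Fin (n + 1)) (u : Fin n → V) :
    ∑ ε : Fin n → Bool, (if (∀ i, Dp n t a u i (ε i)) then sgn n ε else 0)
      = ∏ i, ev n t a u i := by
  have h1 : ∀ ε : Fin n → Bool, (if (∀ i, Dp n t a u i (ε i)) then sgn n ε else 0)
      = ∏ i, ((if Dp n t a u i (ε i) then (1 : ℝ) else 0) * (if ε i then (-1 : ℝ) else 1)) := by
    intro ε
    rw [Finset.prod_mul_distrib, Finset.prod_boole]
    by_cases h : ∀ i, Dp n t a u i (ε i)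
    · simp only [h, if_pos, sgn]
      simp [h]
    · rw [if_neg h, if_neg (by simpa using h), zero_mul]
  rw [Finset.sum_congr rfl fun ε _ => h1 ε,
    sum_pi_bool (fun i b => (if Dp n t a u i b then (1 : ℝ) else 0) * (if b then (-1 : ℝ) else 1))]
  refine Finset.prod_congr rfl fun i _ => ?_
  by_cases h0 : Dp n t a u i false <;> by_cases h1 : Dp n t a u i true <;>
    simp [ev, h0, h1]


noncomputable def Bc (V : Type) [Fintype V] (n : ℕ) : ℝ :=
  (((n : ℝ) + 1) ^ (Fintype.card V))⁻¹

def Np (V : Type) [Fintype V] (n : ℕ) : ℕ :=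
  Fintype.card ((Fin n → V) × (Fin n → Bool))

noncomputable def lam (V : Type) [Fintype V] (n : ℕ) : ℝ :=
  Bc V n / ((Np V n : ℝ) + 1)

noncomputable def pert (Γ : Set (MIAtom V)) (n : ℕ) (x : Fin n → V)
    (s : V → Fin (n + 1)) : ℝ :=
  ∑ u : Fin n → V, ∑ ε : Fin n → Bool,
    if (u ∈ Cls Γ n x ∧ s = sfun n u ε) then sgn n ε else 0

noncomputable def mu (Γ : Set (MIAtom V)) (n : ℕ) (x : Fin n → V)
    (s : V → Fin (n + 1)) : ℝ :=
  Bc V n + lam V n * pert Γ n x s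

lemma Bc_pos (n : ℕ) : 0 < Bc V n := by
  unfold Bc
  have : (0 : ℝ) < ((n : ℝ) + 1) ^ (Fintype.card V) :=
    pow_pos (by positivity) _
  exact inv_pos.mpr this

lemma lam_pos (n : ℕ) : 0 < lam V n := by
  unfold lam
  exact div_pos (Bc_pos n) (by positivity)

lemma abs_sgn (n : ℕ) (ε : Fin n → Bool) : |sgn n ε| = 1 := by
  unfold sgn
  rw [Finset.abs_prod]
  rw [Finset.prod_eq_one]
  intro i _
  by_cases h : ε i <;> simp [h]

lemma pert_bound (Γ : Set (MIAtom V)) (n : ℕ) (x : Fin n → V) (s : V → Fin (n + 1)) :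
    |pert Γ n x s| ≤ (Np V n : ℝ) := by
  unfold pert
  calc |∑ u : Fin n → V, ∑ ε : Fin n → Bool,
        if (u ∈ Cls Γ n x ∧ s = sfun n u ε) then sgn n ε else 0|
      ≤ ∑ u : Fin n → V, |∑ ε : Fin n → Bool,
        if (u ∈ Cls Γ n x ∧ s = sfun n u ε) then sgn n ε else 0| :=
        Finset.abs_sum_le_sum_abs _ _
    _ ≤ ∑ u : Fin n → V, ∑ ε : Fin n → Bool,
        |if (u ∈ Cls Γ n x ∧ s = sfun n u ε) then sgn n ε else 0| :=
        Finset.sum_le_sum fun u _ => Finset.abs_sum_le_sum_abs _ _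
    _ ≤ ∑ _u : Fin n → V, ∑ _ε : Fin n → Bool, (1 : ℝ) := by
        refine Finset.sum_le_sum fun u _ => Finset.sum_le_sum fun ε _ => ?_
        split_ifs with h
        · exact le_of_eq (abs_sgn n ε)
        · simp
    _ = (Np V n : ℝ) := by
        simp [Np, Fintype.card_prod]
  
lemma lam_np_le (n : ℕ) : lam V n * (Np V n : ℝ) ≤ Bc V n := by
  unfold lam
  rw [div_mul_eq_mul_div, div_le_iff₀ (by positivity)]
  nlinarith [Bc_pos (V := V) n]

lemma mu_nonneg (Γ : Set (MIAtom V)) (n : ℕ) (x : Fin n → V) (s : V → Fin (n + 1)) :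
    0 ≤ mu Γ n x s := by
  unfold mu
  have h1 := pert_bound Γ n x s
  have h2 := lam_np_le (V := V) n
  have h3 := lam_pos (V := V) n
  have h4 : lam V n * pert Γ n x s ≥ -(lam V n * (Np V n : ℝ)) := by
    have := neg_abs_le (pert Γ n x s)
    nlinarith
  linarith

lemma sum_sgn {n : ℕ} (hn : 0 < n) : ∑ ε : Fin n → Bool, sgn n ε = 0 := by
  unfold sgn
  rw [sum_pi_bool (fun _ b => if b then (-1 : ℝ) else 1)]
  have h : ((if (false : Bool) then (-1 : ℝ) else 1) + (if (true : Bool) then (-1 : ℝ) else 1)) = 0 := by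
    norm_num
  rw [Finset.prod_congr rfl (fun i _ => h), Finset.prod_const]
  exact zero_pow (by simp [hn.ne'])

lemma sum_mu (Γ : Set (MIAtom V)) (n : ℕ) (hn : 0 < n) (x : Fin n → V) :
    ∑ s : V → Fin (n + 1), mu Γ n x s = 1 := by
  unfold mu
  rw [Finset.sum_add_distrib]
  have hc : ∑ _s : V → Fin (n + 1), Bc V n = 1 := by
    rw [Finset.sum_const, nsmul_eq_mul, Finset.card_univ, Fintype.card_fun, Fintype.card_fin]
    unfold Bc
    push_cast
    rw [mul_inv_cancel₀]
    positivity
  have hp : ∑ s : V → Fin (n + 1), lam V n * pert Γ n x s = 0 := by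
    rw [← Finset.mul_sum]
    suffices hs : ∑ s : V → Fin (n + 1), pert Γ n x s = 0 by rw [hs, mul_zero]
    unfold pert
    rw [Finset.sum_comm]
    refine Finset.sum_eq_zero fun u _ => ?_
    rw [Finset.sum_comm]
    have hcol : ∀ ε : Fin n → Bool,
        (∑ s : V → Fin (n + 1), if (u ∈ Cls Γ n x ∧ s = sfun n u ε) then sgn n ε else 0)
          = (if u ∈ Cls Γ n x then sgn n ε else 0) := by
      intro ε
      rw [Finset.sum_eq_single (sfun n u ε)]
      · by_cases hc : u ∈ Cls Γ n x <;> simp [hc]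
      · intro s _ hne; rw [if_neg]; rintro ⟨_, h⟩; exact hne h
      · intro h; exact absurd (Finset.mem_univ _) h
    rw [Finset.sum_congr rfl fun ε _ => hcol ε]
    by_cases hc : u ∈ Cls Γ n x
    · simp only [if_pos hc]
      exact sum_sgn hn
    · simp [hc]
  rw [hc, hp]
  norm_num


def margCnt {k n : ℕ} (t : Fin k → V) (a : Fin k → Fin (n + 1)) : ℕ :=
  (Finset.univ.filter fun s : V → Fin (n + 1) => (fun j => s (t j)) = a).card

lemma marg_eq (Γ : Set (MIAtom V)) (n : ℕ) (x : Fin n → V)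
    (hmemInj : ∀ u ∈ Cls Γ n x, Function.Injective u) {k : ℕ} (t : Fin k → V)
    (a : Fin k → Fin (n + 1)) :
    ∑ s : V → Fin (n + 1), (if (fun j => s (t j)) = a then mu Γ n x s else 0)
      = (margCnt t a : ℝ) * Bc V n + lam V n * Phi Γ n x t a := by
  have hsplit : ∀ s : V → Fin (n + 1), (if (fun j => s (t j)) = a then mu Γ n x s else 0)
      = (if (fun j => s (t j)) = a then Bc V n else 0)
        + lam V n * (if (fun j => s (t j)) = a then pert Γ n x s else 0) := by
    intro s; unfold mu; split_ifs <;> simp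
  rw [Finset.sum_congr rfl fun s _ => hsplit s, Finset.sum_add_distrib]
  congr 1
  · rw [← Finset.sum_filter, Finset.sum_const, nsmul_eq_mul]
    simp [margCnt]
  · rw [← Finset.mul_sum]
    congr 1
    unfold pert
    have hpush : ∀ s : V → Fin (n + 1), (if (fun j => s (t j)) = a then
          (∑ u : Fin n → V, ∑ ε : Fin n → Bool,
            if (u ∈ Cls Γ n x ∧ s = sfun n u ε) then sgn n ε else 0) else 0)
        = ∑ u : Fin n → V, ∑ ε : Fin n → Bool,
            (if (fun j => s (t j)) = a then
              (if (u ∈ Cls Γ n x ∧ s = sfun n u ε) then sgn n ε else 0) else 0) := by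
      intro s
      split_ifs with h
      · rfl
      · simp
    rw [Finset.sum_congr rfl fun s _ => hpush s, Finset.sum_comm]
    have hinner : ∀ u : Fin n → V,
        (∑ s : V → Fin (n + 1), ∑ ε : Fin n → Bool,
          (if (fun j => s (t j)) = a then
            (if (u ∈ Cls Γ n x ∧ s = sfun n u ε) then sgn n ε else 0) else 0))
        = (if u ∈ Cls Γ n x then ∏ i, ev n t a u i else 0) := by
      intro u
      rw [Finset.sum_comm]
      have hcol : ∀ ε : Fin n → Bool,
          (∑ s : V → Fin (n + 1),
            (if (fun j => s (t j)) = a then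
              (if (u ∈ Cls Γ n x ∧ s = sfun n u ε) then sgn n ε else 0) else 0))
          = (if (u ∈ Cls Γ n x ∧ (fun j => sfun n u ε (t j)) = a) then sgn n ε else 0) := by
        intro ε
        rw [Finset.sum_eq_single (sfun n u ε)]
        · by_cases h1 : (fun j => sfun n u ε (t j)) = a <;>
            by_cases h2 : u ∈ Cls Γ n x <;> simp [h1, h2]
        · intro s _ hne
          by_cases h1 : (fun j => s (t j)) = a
          · rw [if_pos h1, if_neg]
            rintro ⟨-, h⟩
            exact hne h
          · rw [if_neg h1]
        · intro h; exact absurd (Finset.mem_univ _) h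
      rw [Finset.sum_congr rfl fun ε _ => hcol ε]
      by_cases hu : u ∈ Cls Γ n x
      · rw [if_pos hu]
        have hcond : ∀ ε : Fin n → Bool,
            (u ∈ Cls Γ n x ∧ (fun j => sfun n u ε (t j)) = a) ↔ (∀ i, Dp n t a u i (ε i)) := by
          intro ε
          constructor
          · rintro ⟨-, hf⟩
            exact (cond_iff (hmemInj u hu) t a ε).mp (funext_iff.mp hf)
          · intro hD
            exact ⟨hu, funext ((cond_iff (hmemInj u hu) t a ε).mpr hD)⟩
        rw [Finset.sum_congr rfl fun ε _ => if_congr (hcond ε) rfl rfl]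
        exact sum_eps t a u
      · rw [if_neg hu]
        refine Finset.sum_eq_zero fun ε _ => ?_
        rw [if_neg]
        rintro ⟨h, -⟩
        exact hu h
    rw [Finset.sum_congr rfl fun u _ => hinner u]
    rfl

lemma margCnt_eq {k n : ℕ} (t : Fin k → V) (ht : Function.Injective t)
    (a : Fin k → Fin (n + 1)) :
    margCnt t a = (n + 1) ^ (Fintype.card V - k) := by
  have e : {s : V → Fin (n + 1) // (fun j => s (t j)) = a}
      ≃ ({v : V // v ∉ Set.range t} → Fin (n + 1)) :=
    { toFun := fun s q => s.1 q.1
      invFun := fun g =>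
        ⟨fun v => if h : ∃ j, t j = v then a (Classical.choose h)
            else g ⟨v, fun hv => h (Set.mem_range.mp hv)⟩, by
          funext j
          have hj : ∃ j', t j' = t j := ⟨j, rfl⟩
          simp only [dif_pos hj]
          have := Classical.choose_spec hj
          rw [ht this]⟩
      left_inv := by
        rintro ⟨s, hs⟩
        apply Subtype.ext
        funext v
        dsimp only
        split_ifs with h
        · have hspec := Classical.choose_spec h
          calc a (Classical.choose h) = s (t (Classical.choose h)) :=
                (congrFun hs (Classical.choose h)).symm
            _ = s v := by rw [hspec]
        · rfl
      right_inv := by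
        intro g
        funext q
        dsimp only
        rw [dif_neg (fun h => q.2 (Set.mem_range.mpr h))] }
  have h1 : margCnt t a
      = Fintype.card {s : V → Fin (n + 1) // (fun j => s (t j)) = a} :=
    (Fintype.card_subtype _).symm
  rw [h1, Fintype.card_congr e, Fintype.card_fun, Fintype.card_fin]
  congr 1
  have h2 : Fintype.card {v : V // v ∈ Set.range t} = k := by
    rw [Set.card_range_of_injective ht, Fintype.card_fin]
  rw [Fintype.card_subtype_compl, h2]


lemma ev_ne_zero_mem {n k : ℕ} (t : Fin k → V) (a : Fin k → Fin (n + 1)) (u : Fin n → V)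
    (i : Fin n) (h : ev n t a u i ≠ 0) : ∃ j, t j = u i := by
  by_contra hno
  push_neg at hno
  apply h
  unfold ev
  by_cases hj : ∃ j, a j = i.succ
  · obtain ⟨j0, hj0⟩ := hj
    have hDf : ¬ Dp n t a u i false := fun hD => hno j0 (hD.1 j0 hj0).1.symm
    have hDt : ¬ Dp n t a u i true := fun hD => by simpa using (hD.1 j0 hj0).2
    rw [if_neg hDf, if_neg hDt, add_zero]
  · have hDf : Dp n t a u i false :=
      ⟨fun j hjs => absurd ⟨j, hjs⟩ hj, fun j _ hji => absurd hji.symm (hno j)⟩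
    have hDt : Dp n t a u i true :=
      ⟨fun j hjs => absurd ⟨j, hjs⟩ hj, fun _ _ _ => rfl⟩
    rw [if_pos hDf, if_pos hDt]
    norm_num

lemma Dp_congr {n k : ℕ} {t t' : Fin k → V} (ht : Function.Injective t)
    (ht' : Function.Injective t') (a : Fin k → Fin (n + 1)) {u u' : Fin n → V}
    (h : Fin n → Fin k) (hu : ∀ i, u i = t (h i)) (hu' : ∀ i, u' i = t' (h i))
    (i : Fin n) (b : Bool) : Dp n t a u i b ↔ Dp n t' a u' i b := by
  unfold Dp
  simp only [hu, hu', ht.eq_iff, ht'.eq_iff]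

lemma ev_congr {n k : ℕ} {t t' : Fin k → V} (ht : Function.Injective t)
    (ht' : Function.Injective t') (a : Fin k → Fin (n + 1)) {u u' : Fin n → V}
    (h : Fin n → Fin k) (hu : ∀ i, u i = t (h i)) (hu' : ∀ i, u' i = t' (h i))
    (i : Fin n) : ev n t a u i = ev n t' a u' i := by
  unfold ev
  rw [if_congr (Dp_congr ht ht' a h hu hu' i false) rfl rfl,
      if_congr (Dp_congr ht ht' a h hu hu' i true) rfl rfl]

lemma Phi_congr (Γ : Set (MIAtom V)) (n : ℕ) (x : Fin n → V)
    (hmemInj : ∀ u ∈ Cls Γ n x, Function.Injective u)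
    {k : ℕ} {t t' : Fin k → V} (ht : Function.Injective t) (ht' : Function.Injective t')
    (hC : ∀ h : Fin n → Fin k, Function.Injective h →
      ((fun i => t (h i)) ∈ Cls Γ n x ↔ (fun i => t' (h i)) ∈ Cls Γ n x))
    (a : Fin k → Fin (n + 1)) : Phi Γ n x t a = Phi Γ n x t' a := by
  unfold Phi
  have supp : ∀ (tt : Fin k → V) (u : Fin n → V),
      (if u ∈ Cls Γ n x then ∏ i, ev n tt a u i else 0) ≠ 0 →
      u ∈ Cls Γ n x ∧ ∀ i, ∃ j, tt j = u i := by
    intro tt u hne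
    by_cases hu : u ∈ Cls Γ n x
    · refine ⟨hu, fun i => ?_⟩
      rw [if_pos hu] at hne
      exact ev_ne_zero_mem tt a u i (Finset.prod_ne_zero_iff.mp hne i (Finset.mem_univ i))
    · rw [if_neg hu] at hne
      exact absurd rfl hne
  have val : ∀ (u : Fin n → V) (h : Fin n → Fin k), (∀ i, t (h i) = u i) →
      (if u ∈ Cls Γ n x then ∏ i, ev n t a u i else 0)
        = (if (fun i => t' (h i)) ∈ Cls Γ n x then
            ∏ i, ev n t' a (fun i' => t' (h i')) i else 0) := by
    intro u h hspec
    by_cases hu : u ∈ Cls Γ n x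
    · have huinj := hmemInj u hu
      have hinj : Function.Injective h := fun i i' hii =>
        huinj (by rw [← hspec i, ← hspec i', hii])
      have hmem' : (fun i => t' (h i)) ∈ Cls Γ n x := by
        refine (hC h hinj).mp ?_
        rwa [show (fun i => t (h i)) = u from funext hspec]
      rw [if_pos hu, if_pos hmem']
      exact Finset.prod_congr rfl fun i _ =>
        ev_congr ht ht' a h (fun i => (hspec i).symm) (fun _ => rfl) i
    · rw [if_neg hu, if_neg]
      intro hmem'
      have hli : Function.Injective (fun i => t' (h i)) := hmemInj _ hmem'
      have hinj : Function.Injective h := fun i i' hii => hli (by simp only []; rw [hii])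
      have := (hC h hinj).mpr hmem'
      rw [show (fun i => t (h i)) = u from funext hspec] at this
      exact hu this
  refine Finset.sum_bij_ne_zero
    (fun u _ hne => fun i => t' (Classical.choose ((supp t u hne).2 i)))
    (fun u h1 h2 => Finset.mem_univ _) ?_ ?_ ?_
  · -- injectivity
    intro u1 h11 h12 u2 h21 h22 heq
    have s1 : ∀ i, t (Classical.choose ((supp t u1 h12).2 i)) = u1 i :=
      fun i => Classical.choose_spec ((supp t u1 h12).2 i)
    have s2 : ∀ i, t (Classical.choose ((supp t u2 h22).2 i)) = u2 i :=
      fun i => Classical.choose_spec ((supp t u2 h22).2 i)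
    funext i
    have hcc : Classical.choose ((supp t u1 h12).2 i)
        = Classical.choose ((supp t u2 h22).2 i) := ht' (congrFun heq i)
    rw [← s1 i, ← s2 i, hcc]
  · -- surjectivity
    intro w hw hne
    have hsup := supp t' w hne
    have hwi := hmemInj w hsup.1
    have s' : ∀ i, t' (Classical.choose (hsup.2 i)) = w i :=
      fun i => Classical.choose_spec (hsup.2 i)
    have hinj : Function.Injective (fun i => Classical.choose (hsup.2 i) : Fin n → Fin k) :=
      fun i i' hii => hwi (by rw [← s' i, ← s' i']; exact congrArg t' hii)
    have humem : (fun i => t (Classical.choose (hsup.2 i))) ∈ Cls Γ n x := by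
      refine (hC _ hinj).mpr ?_
      rw [show (fun i => t' (Classical.choose (hsup.2 i))) = w from funext s']
      exact hsup.1
    have hFne : (if (fun i => t (Classical.choose (hsup.2 i))) ∈ Cls Γ n x then
        ∏ i, ev n t a (fun i' => t (Classical.choose (hsup.2 i'))) i else 0) ≠ 0 := by
      rw [if_pos humem]
      have heq2 : ∏ i, ev n t a (fun i' => t (Classical.choose (hsup.2 i'))) i
          = ∏ i, ev n t' a w i :=
        Finset.prod_congr rfl fun i _ =>
          ev_congr ht ht' a (fun i' => Classical.choose (hsup.2 i'))
            (fun _ => rfl) (fun i' => (s' i').symm) i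
      rw [heq2]
      rw [if_pos hsup.1] at hne
      exact hne
    refine ⟨(fun i => t (Classical.choose (hsup.2 i))), Finset.mem_univ _, hFne, ?_⟩
    have gen : ∀ (i : Fin n) (hp : ∃ j, t j = t (Classical.choose (hsup.2 i))),
        t' (Classical.choose hp) = w i := by
      intro i hp
      have h1 : t (Classical.choose hp) = t (Classical.choose (hsup.2 i)) :=
        Classical.choose_spec hp
      rw [ht h1]
      exact s' i
    exact funext fun i => gen i _
  · -- values
    intro u h1 h2
    exact val u (fun i => Classical.choose ((supp t u h2).2 i))
      (fun i => Classical.choose_spec ((supp t u h2).2 i))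

lemma Phi_diag (Γ : Set (MIAtom V)) (n : ℕ) (x : Fin n → V) (t : Fin n → V) :
    Phi Γ n x t (fun j => Fin.succ j) = if t ∈ Cls Γ n x then 1 else 0 := by
  unfold Phi
  have hev : ∀ (u : Fin n → V) (i : Fin n),
      ev n t (fun j => Fin.succ j) u i = if u i = t i then 1 else 0 := by
    intro u i
    unfold ev
    have hDt : ¬ Dp n t (fun j => Fin.succ j) u i true := by
      intro hD
      simpa using (hD.1 i rfl).2
    rw [if_neg hDt, add_zero]
    refine if_congr ?_ rfl rfl
    unfold Dp
    constructor
    · intro hD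
      exact (hD.1 i rfl).1
    · intro hui
      constructor
      · intro j hj
        have : j = i := by
          have := Fin.succ_inj.mp hj
          exact this
        subst this
        exact ⟨hui, rfl⟩
      · intro j hj
        exact absurd hj (Fin.succ_ne_zero j)
  have hprod : ∀ u : Fin n → V, ∏ i, ev n t (fun j => Fin.succ j) u i
      = if u = t then 1 else 0 := by
    intro u
    by_cases h : u = t
    · subst h
      rw [if_pos rfl]
      exact Finset.prod_eq_one fun i _ => by rw [hev, if_pos rfl]
    · rw [if_neg h]
      obtain ⟨i0, hi0⟩ : ∃ i, u i ≠ t i := by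
        by_contra hc
        push_neg at hc
        exact h (funext hc)
      exact Finset.prod_eq_zero (Finset.mem_univ i0) (by rw [hev, if_neg hi0])
  rw [Finset.sum_congr rfl fun u _ => by rw [hprod u]]
  rw [Finset.sum_congr rfl fun u _ =>
    (by
      by_cases h1 : u ∈ Cls Γ n x <;> by_cases h2 : u = t <;> simp [h1, h2] :
      (if u ∈ Cls Γ n x then (if u = t then (1:ℝ) else 0) else 0)
        = (if u = t then (if t ∈ Cls Γ n x then (1:ℝ) else 0) else 0))]
  rw [Finset.sum_ite_eq' Finset.univ t
    (fun _ => if t ∈ Cls Γ n x then (1:ℝ) else 0), if_pos (Finset.mem_univ t)]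

end Core

/-- **Completeness of the axiomatization of marginal identity atoms.**
For every finite set `Γ ∪ {σ}` of marginal identity atoms over tuples of distinct
variables: if `Γ ⊨ σ`, then `Γ ⊢ σ`. -/
theorem completeness
    (V : Type) [Fintype V] [DecidableEq V]
    (Γ : Set (MIAtom V)) (hfin : Γ.Finite)
    (hGamma : ∀ τ ∈ Γ, τ.distinct)
    (σ : MIAtom V) (hσ : σ.distinct)
    (hsem : SemConseq Γ σ) :
    Derives Γ σ := by
  obtain ⟨n, x, y⟩ := σ
  obtain ⟨hx, hy⟩ := hσ
  rcases Nat.eq_zero_or_pos n with hn | hn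
  · subst hn
    have hxy : x = y := funext fun i => i.elim0
    subst hxy
    exact Derives.refl 0 x hx
  · have hmemInj : ∀ u ∈ Cls Γ n x, Function.Injective u := fun u hu =>
      (derives_distinct hGamma (mem_Cls.mp hu)).2
    have hcard : 2 ≤ Fintype.card (Fin (n + 1)) := by
      simpa using Nat.succ_le_succ hn
    have hsat : ∀ τ ∈ Γ, SatisfiesMI (mu Γ n x) τ := by
      intro τ hτ
      obtain ⟨k, t, t'⟩ := τ
      obtain ⟨ht, ht'⟩ := hGamma _ hτ
      intro a
      have hC : ∀ h : Fin n → Fin k, Function.Injective h →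
          ((fun i => t (h i)) ∈ Cls Γ n x ↔ (fun i => t' (h i)) ∈ Cls Γ n x) := by
        intro h hh
        have hd : Derives Γ ⟨n, t ∘ h, t' ∘ h⟩ := Derives.proj h hh (Derives.hyp hτ)
        constructor
        · intro hm
          exact mem_Cls.mpr (Derives.trans (mem_Cls.mp hm) hd)
        · intro hm
          exact mem_Cls.mpr (Derives.trans (mem_Cls.mp hm) (Derives.symm hd))
      show (∑ s : V → Fin (n + 1), if (fun i => s (t i)) = a then mu Γ n x s else 0)
        = (∑ s : V → Fin (n + 1), if (fun i => s (t' i)) = a then mu Γ n x s else 0)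
      rw [marg_eq Γ n x hmemInj t a, marg_eq Γ n x hmemInj t' a,
        margCnt_eq t ht a, margCnt_eq t' ht' a,
        Phi_congr Γ n x hmemInj ht ht' hC a]
    have hX := hsem (Fin (n + 1)) hcard (mu Γ n x) (mu_nonneg Γ n x) (sum_mu Γ n hn x) hsat
    have h2 : (∑ s : V → Fin (n + 1),
          if (fun j => s (x j)) = (fun j : Fin n => Fin.succ j) then mu Γ n x s else 0)
        = (∑ s : V → Fin (n + 1),
          if (fun j => s (y j)) = (fun j : Fin n => Fin.succ j) then mu Γ n x s else 0) :=
      hX (fun j => Fin.succ j)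
    rw [marg_eq Γ n x hmemInj x _, marg_eq Γ n x hmemInj y _,
      margCnt_eq x hx _, margCnt_eq y hy _, Phi_diag, Phi_diag] at h2
    have hxC : x ∈ Cls Γ n x := mem_Cls.mpr (Derives.refl n x hx)
    rw [if_pos hxC] at h2
    by_cases hyC : y ∈ Cls Γ n x
    · exact mem_Cls.mp hyC
    · exfalso
      rw [if_neg hyC, mul_one, mul_zero] at h2
      have hl := lam_pos (V := V) n
      linarith

end MI
end

section
/- Soundness of the projection-and-permutation rule: let A be a finite set, 𝕏 a weighted team over a variable domain containing the distinct variables x₁,…,xₙ and the distinct variables y₁,…,yₙ, and suppose |𝕏_{x₁…xₙ=a⃗}| = |𝕏_{y₁…yₙ=a⃗}| for every a⃗ ∈ Aⁿ. Then for every sequence i₁,…,i_k of distinct indices from {1,…,n} and every b⃗ ∈ Aᵏ, |𝕏_{x_{i₁}…x_{i_k}=b⃗}| = |𝕏_{y_{i₁}…y_{i_k}=b⃗}|. -/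
namespace PTS

/-- The marginal weight `|X_{x⃗ = a⃗}|` of a weighted team `X` over assignments
`V → A` with respect to a tuple `x⃗` of variables and a tuple `a⃗` of values. -/
noncomputable def margW {V A : Type} [Fintype V] [DecidableEq V] [Fintype A] [DecidableEq A]
    (X : (V → A) → ℝ) {n : ℕ} (xs : Fin n → V) (a : Fin n → A) : ℝ :=
  ∑ s : V → A, if (fun i => s (xs i)) = a then X s else 0

lemma margW_comp {V A : Type} [Fintype V] [DecidableEq V] [Fintype A] [DecidableEq A]
    (X : (V → A) → ℝ) {n k : ℕ} (xs : Fin n → V) (f : Fin k → Fin n) (b : Fin k → A) :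
    margW X (xs ∘ f) b = ∑ a : Fin n → A, if (fun i => a (f i)) = b then margW X xs a else 0 := by
  unfold margW
  have step : ∀ a : Fin n → A,
      (if (fun i => a (f i)) = b then ∑ s : V → A, if (fun i => s (xs i)) = a then X s else 0 else 0)
      = ∑ s : V → A, if (fun i => s (xs i)) = a then (if (fun i => a (f i)) = b then X s else 0) else 0 := by
    intro a
    split
    · rfl
    · simp_all
  simp only [step]
  rw [Finset.sum_comm]
  refine Finset.sum_congr rfl fun s _ => ?_
  rw [Finset.sum_ite_eq Finset.univ (fun i => s (xs i))
    (fun a => if (fun i => a (f i)) = b then X s else 0)]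
  simp [Function.comp]

/-- **Soundness of the projection-and-permutation rule.**
If the weighted team `X` satisfies the marginal identity atom
`x₁…xₙ ≈ y₁…yₙ` (for tuples of distinct variables), then for every sequence
`i₁,…,i_k` of distinct indices from `{1,…,n}` it also satisfies
`x_{i₁}…x_{i_k} ≈ y_{i₁}…y_{i_k}`. -/
theorem projection_permutation_sound
    (V A : Type) [Fintype V] [DecidableEq V] [Fintype A] [DecidableEq A]
    (X : (V → A) → ℝ) (hX : ∀ s, 0 ≤ X s)
    (n : ℕ) (xs ys : Fin n → V)
    (hxs : Function.Injective xs) (hys : Function.Injective ys)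
    (h : ∀ a : Fin n → A, margW X xs a = margW X ys a)
    (k : ℕ) (f : Fin k → Fin n) (hf : Function.Injective f)
    (b : Fin k → A) :
    margW X (xs ∘ f) b = margW X (ys ∘ f) b := by
  rw [margW_comp, margW_comp]
  exact Finset.sum_congr rfl fun a _ => by rw [h a]

end PTS
end

section
/- There is no finite family S₁,…,S_m of finite systems of linear inequalities in two real variables, each inequality being of the form a·u + b·v ≤ c or a·u + b·v < c with rational a, b, c, such that the union of the solution sets of S₁,…,S_m equals the two-element set {(1/√2, 1 − 1/√2), (1 − 1/√2, 1/√2)} ⊆ ℝ². -/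
/-- The solution set of a finite system of (strict and non-strict) linear
inequalities in two real variables with rational coefficients.  An inequality is
encoded as `(a, b, c, strict)` and means `a·u + b·v < c` if `strict = true` and
`a·u + b·v ≤ c` otherwise. -/
def solSet (S : List (ℚ × ℚ × ℚ × Bool)) : Set (ℝ × ℝ) :=
  {p | ∀ q ∈ S,
    if q.2.2.2 then (q.1 : ℝ) * p.1 + (q.2.1 : ℝ) * p.2 < (q.2.2.1 : ℝ)
    else (q.1 : ℝ) * p.1 + (q.2.1 : ℝ) * p.2 ≤ (q.2.2.1 : ℝ)}

/-! On the line `u + v = 1` a rational inequality `a·u + b·v ⋈ c` reads `(a - b)·u + b ⋈ c`.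
Either `a = b` and it does not depend on `u`, or it cannot be tight at an irrational `u`, so it
holds strictly there. Hence every system satisfied by `(r, 1 - r)` with `r = 1/√2` is satisfied on
a whole segment of that line around it, which no finite set contains. -/

open Filter Topology

-- `p ∈ solSet S` unfolds to `∀ q ∈ S, IneqHolds q p`.
def IneqHolds (q : ℚ × ℚ × ℚ × Bool) (p : ℝ × ℝ) : Prop :=
  if q.2.2.2 then (q.1 : ℝ) * p.1 + (q.2.1 : ℝ) * p.2 < (q.2.2.1 : ℝ)
  else (q.1 : ℝ) * p.1 + (q.2.1 : ℝ) * p.2 ≤ (q.2.2.1 : ℝ)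

lemma Irrational.ratCast_mul_add_ratCast_mul_one_sub_ne {r : ℝ} (hr : Irrational r) {a b : ℚ}
    (hab : a ≠ b) (c : ℚ) : (a : ℝ) * r + b * (1 - r) ≠ c := by
  have : Irrational (((a - b : ℚ) : ℝ) * r + b) :=
    (hr.ratCast_mul (sub_ne_zero.2 hab)).add_ratCast b
  convert this.ne_rat c using 1
  push_cast
  ring

lemma IneqHolds.eventually_of_irrational {r : ℝ} (hr : Irrational r) {q : ℚ × ℚ × ℚ × Bool}
    (h : IneqHolds q (r, 1 - r)) : ∀ᶠ s in 𝓝 r, IneqHolds q (s, 1 - s) := by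
  obtain ⟨a, b, c, strict⟩ := q
  by_cases hab : a = b
  · subst hab
    have hconst : ∀ s : ℝ, (a : ℝ) * s + a * (1 - s) = a := fun s => by ring
    refine Eventually.of_forall fun s => ?_
    simpa only [IneqHolds, hconst] using h
  · have hlt : (a : ℝ) * r + b * (1 - r) < c := by
      cases strict
      · exact lt_of_le_of_ne h (hr.ratCast_mul_add_ratCast_mul_one_sub_ne hab c)
      · exact h
    have hcont : Continuous fun s : ℝ => (a : ℝ) * s + b * (1 - s) := by fun_prop
    filter_upwards [hcont.continuousAt.eventually_lt continuousAt_const hlt] with s hs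
    cases strict
    exacts [hs.le, hs]

lemma eventually_mem_solSet_of_irrational {r : ℝ} (hr : Irrational r)
    {S : List (ℚ × ℚ × ℚ × Bool)} (h : (r, 1 - r) ∈ solSet S) :
    ∀ᶠ s in 𝓝 r, (s, 1 - s) ∈ solSet S :=
  (eventually_all_finite S.finite_toSet).2 fun q hq =>
    IneqHolds.eventually_of_irrational hr (h q hq)

/-- **No finite union of rational linear systems carves out the two irrational points.**
There is no finite family `S₁, …, S_m` of finite systems of linear inequalities in
two real variables with rational data whose union of solution sets equals
`{(1/√2, 1 − 1/√2), (1 − 1/√2, 1/√2)}`. -/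
theorem no_rational_systems_for_sqrt_two :
    ¬ ∃ systems : List (List (ℚ × ℚ × ℚ × Bool)),
      {p : ℝ × ℝ | ∃ S ∈ systems, p ∈ solSet S} =
        ({(1 / Real.sqrt 2, 1 - 1 / Real.sqrt 2),
          (1 - 1 / Real.sqrt 2, 1 / Real.sqrt 2)} : Set (ℝ × ℝ)) := by
  rintro ⟨systems, hEq⟩
  set r : ℝ := 1 / Real.sqrt 2
  have hr : Irrational r := by simpa only [r, one_div] using irrational_sqrt_two.inv
  obtain ⟨S, hS, hrS⟩ : (r, 1 - r) ∈ {p : ℝ × ℝ | ∃ S ∈ systems, p ∈ solSet S} :=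
    hEq ▸ Set.mem_insert _ _
  have hfinite : {s : ℝ | (s, 1 - s) ∈ {p : ℝ × ℝ | ∃ S ∈ systems, p ∈ solSet S}}.Finite := by
    rw [hEq]
    exact ((Set.finite_singleton _).insert _).preimage fun _ _ _ _ h => congrArg Prod.fst h
  refine infinite_of_mem_nhds r ?_ hfinite
  filter_upwards [eventually_mem_solSet_of_irrational hr hrS] with s hs using ⟨S, hS, hs⟩
end

section
/- Let 𝔇 be a collection of atoms, where each atom D ∈ 𝔇 of arity k is given by a semantic predicate assigning to every finite structure 𝔄, weighted team 𝕏, and k-tuple x⃗ of variables a truth value 𝔄 ⊨^w_𝕏 D(x⃗). Suppose every D ∈ 𝔇 satisfies: for all finite structures 𝔄 and all weighted teams 𝕏 with |𝕏| > 0, 𝔄 ⊨^w_𝕏 D(x⃗) if and only if 𝔄 ⊨^w_{(1/|𝕏|)·𝕏} D(x⃗). Then every formula φ of FO(𝔇) (first-order logic in negation normal form extended with the atoms of 𝔇, interpreted with weighted probabilistic team semantics) satisfies: for all finite structures 𝔄 and all weighted teams 𝕏 with |𝕏| > 0, 𝔄 ⊨^w_𝕏 φ if and only if 𝔄 ⊨^w_{(1/|𝕏|)·𝕏}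 φ. -/
namespace GTS

/-- Syntax of first-order logic (in negation normal form) over a relational
vocabulary `τ`, extended with a collection `Atom` of generalized team atoms with
arities `arA`.  Variables come from the type `V`. -/
inductive GFormula (V : Type) (τ : Type) (arR : τ → ℕ) (Atom : Type) (arA : Atom → ℕ) : Type
  | eq   (x y : V)
  | neq  (x y : V)
  | rel  (R : τ) (ts : Fin (arR R) → V)
  | nrel (R : τ) (ts : Fin (arR R) → V)
  | atom (D : Atom) (xs : Fin (arA D) → V)
  | and  (φ ψ : GFormula V τ arR Atom arA)
  | or   (φ ψ : GFormula V τ arR Atom arA)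
  | ex   (x : V) (φ : GFormula V τ arR Atom arA)
  | all  (x : V) (φ : GFormula V τ arR Atom arA)

variable {V τ Atom : Type} {arR : τ → ℕ} {arA : Atom → ℕ} {A : Type}
variable [Fintype V] [DecidableEq V] [Fintype A]

/-- Weighted probabilistic team semantics for FO(𝔇), where the semantics of each
generalized atom `D ∈ 𝔇` is given by the semantic predicate `sem`. -/
def gSat (I : ∀ R : τ, (Fin (arR R) → A) → Prop)
    (sem : ∀ D : Atom, ((V → A) → ℝ) → (Fin (arA D) → V) → Prop) :
    GFormula V τ arR Atom arA → ((V → A) → ℝ) → Prop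
  | .eq x y, X => ∀ s, 0 < X s → s x = s y
  | .neq x y, X => ∀ s, 0 < X s → s x ≠ s y
  | .rel R ts, X => ∀ s, 0 < X s → I R (fun i => s (ts i))
  | .nrel R ts, X => ∀ s, 0 < X s → ¬ I R (fun i => s (ts i))
  | .atom D xs, X => sem D X xs
  | .and φ ψ, X => gSat I sem φ X ∧ gSat I sem ψ X
  | .or φ ψ, X => ∃ Y Z : (V → A) → ℝ, (∀ s, 0 ≤ Y s) ∧ (∀ s, 0 ≤ Z s) ∧
      (∀ s, Y s + Z s = X s) ∧ gSat I sem φ Y ∧ gSat I sem ψ Z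
  | .ex x φ, X => ∃ Y : (V → A) → ℝ, (∀ s, 0 ≤ Y s) ∧
      (∀ s : V → A, (∑ a : A, Y (Function.update s x a)) =
        ∑ a : A, X (Function.update s x a)) ∧ gSat I sem φ Y
  | .all x φ, X =>
      gSat I sem φ (fun s => (∑ a : A, X (Function.update s x a)) / (Fintype.card A : ℝ))

lemma gSat_smul (I : ∀ R : τ, (Fin (arR R) → A) → Prop)
    (sem : ∀ D : Atom, ((V → A) → ℝ) → (Fin (arA D) → V) → Prop)
    (hA : ∀ (D : Atom) (X : (V → A) → ℝ) (xs : Fin (arA D) → V) (c : ℝ),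
      0 < c → (∀ s, 0 ≤ X s) → (sem D X xs ↔ sem D (fun s => c * X s) xs))
    (φ : GFormula V τ arR Atom arA) :
    ∀ (c : ℝ), 0 < c → ∀ X : (V → A) → ℝ, (∀ s, 0 ≤ X s) →
      gSat I sem φ X → gSat I sem φ (fun s => c * X s) := by
  induction φ with
  | eq x y =>
      intro c hc X hX h s hs
      have hs' : 0 < c * X s := hs
      exact h s (by nlinarith [hX s])
  | neq x y =>
      intro c hc X hX h s hs
      have hs' : 0 < c * X s := hs
      exact h s (by nlinarith [hX s])
  | rel R ts =>
      intro c hc X hX h s hs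
      have hs' : 0 < c * X s := hs
      exact h s (by nlinarith [hX s])
  | nrel R ts =>
      intro c hc X hX h s hs
      have hs' : 0 < c * X s := hs
      exact h s (by nlinarith [hX s])
  | atom D xs =>
      intro c hc X hX h
      exact (hA D X xs c hc hX).mp h
  | and φ ψ ihφ ihψ =>
      intro c hc X hX h
      exact ⟨ihφ c hc X hX h.1, ihψ c hc X hX h.2⟩
  | or φ ψ ihφ ihψ =>
      intro c hc X hX h
      obtain ⟨Y, Z, hY, hZ, hsum, h1, h2⟩ := h
      exact ⟨fun s => c * Y s, fun s => c * Z s,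
        fun s => mul_nonneg hc.le (hY s), fun s => mul_nonneg hc.le (hZ s),
        fun s => by show c * Y s + c * Z s = c * X s; rw [← hsum s]; ring,
        ihφ c hc Y hY h1, ihψ c hc Z hZ h2⟩
  | ex x φ ih =>
      intro c hc X hX h
      obtain ⟨Y, hY, hmarg, h1⟩ := h
      exact ⟨fun s => c * Y s, fun s => mul_nonneg hc.le (hY s),
        fun s => by rw [← Finset.mul_sum, ← Finset.mul_sum, hmarg],
        ih c hc Y hY h1⟩
  | all x φ ih =>
      intro c hc X hX h
      have key := ih c hc (fun s => (∑ a : A, X (Function.update s x a)) / (Fintype.card A : ℝ))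
        (fun s => div_nonneg (Finset.sum_nonneg fun a _ => hX _) (Nat.cast_nonneg _)) h
      have heq : (fun s => (∑ a : A, ((fun t => c * X t) (Function.update s x a))) / (Fintype.card A : ℝ))
          = fun s => c * ((∑ a : A, X (Function.update s x a)) / (Fintype.card A : ℝ)) := by
        funext s
        rw [← Finset.mul_sum, mul_div_assoc]
      show gSat I sem φ _
      rw [heq]
      exact key

lemma gSat_smul_iff (I : ∀ R : τ, (Fin (arR R) → A) → Prop)
    (sem : ∀ D : Atom, ((V → A) → ℝ) → (Fin (arA D) → V) → Prop)
    (hA : ∀ (D : Atom) (X : (V → A) → ℝ) (xs : Fin (arA D) → V) (c : ℝ),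
      0 < c → (∀ s, 0 ≤ X s) → (sem D X xs ↔ sem D (fun s => c * X s) xs))
    (φ : GFormula V τ arR Atom arA) (c : ℝ) (hc : 0 < c)
    (X : (V → A) → ℝ) (hX : ∀ s, 0 ≤ X s) :
    gSat I sem φ X ↔ gSat I sem φ (fun s => c * X s) := by
  constructor
  · exact gSat_smul I sem hA φ c hc X hX
  · intro h
    have := gSat_smul I sem hA φ c⁻¹ (inv_pos.mpr hc) (fun s => c * X s)
      (fun s => mul_nonneg hc.le (hX s)) h
    have heq : (fun s => c⁻¹ * (c * X s)) = X := by
      funext s; field_simp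
    rwa [heq] at this

end GTS

/-- **Normalization invariance lifts from atoms to all of FO(𝔇).**
Let `𝔇` be a collection of atoms whose semantics (on every finite structure,
weighted team and variable tuple) is invariant under replacing a weighted team of
positive total weight by its normalization.  Then every formula of FO(𝔇) under
weighted probabilistic team semantics enjoys the same invariance. -/
theorem atoms_normalization_invariance_lifts
    (V τ Atom : Type) [Fintype V] [DecidableEq V]
    (arR : τ → ℕ) (arA : Atom → ℕ)
    (sem : ∀ (A : Type) [Fintype A] [DecidableEq A],
      (∀ R : τ, (Fin (arR R) → A) → Prop) →
      ∀ D : Atom, ((V → A) → ℝ) → (Fin (arA D) → V) → Prop)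
    (hsem : ∀ (A : Type) [Fintype A] [DecidableEq A], 2 ≤ Fintype.card A →
      ∀ (I : ∀ R : τ, (Fin (arR R) → A) → Prop) (D : Atom)
        (X : (V → A) → ℝ) (xs : Fin (arA D) → V),
        (∀ s, 0 ≤ X s) → 0 < ∑ s, X s →
        (sem A I D X xs ↔ sem A I D (fun s => X s / ∑ t, X t) xs))
    (φ : GTS.GFormula V τ arR Atom arA) :
    ∀ (A : Type) [Fintype A] [DecidableEq A], 2 ≤ Fintype.card A →
      ∀ (I : ∀ R : τ, (Fin (arR R) → A) → Prop) (X : (V → A) → ℝ),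
        (∀ s, 0 ≤ X s) → 0 < ∑ s, X s →
        (GTS.gSat I (sem A I) φ X ↔ GTS.gSat I (sem A I) φ (fun s => X s / ∑ t, X t)) := by
  intro A _ _ hcard I X hX hpos
  have hA : ∀ (D : Atom) (Y : (V → A) → ℝ) (xs : Fin (arA D) → V) (c : ℝ),
      0 < c → (∀ s, 0 ≤ Y s) →
      (sem A I D Y xs ↔ sem A I D (fun s => c * Y s) xs) := by
    intro D Y xs c hc hY
    by_cases h0 : ∑ s, Y s = 0
    · have hY0 : ∀ s ∈ Finset.univ, Y s = 0 :=
        (Finset.sum_eq_zero_iff_of_nonneg (fun s _ => hY s)).mp h0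
      have heq : (fun s => c * Y s) = Y := by
        funext s; rw [hY0 s (Finset.mem_univ s)]; ring
      rw [heq]
    · have hYpos : 0 < ∑ s, Y s :=
        lt_of_le_of_ne (Finset.sum_nonneg fun s _ => hY s) (Ne.symm h0)
      have h1 := hsem A hcard I D Y xs hY hYpos
      have h2 := hsem A hcard I D (fun s => c * Y s) xs
        (fun s => mul_nonneg hc.le (hY s))
        (by rw [← Finset.mul_sum]; exact mul_pos hc hYpos)
      have heq : (fun s => (c * Y s) / ∑ t, c * Y t) = fun s => Y s / ∑ t, Y t := by
        funext s
        rw [← Finset.mul_sum, mul_div_mul_left _ _ (ne_of_gt hc)]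
      rw [h1, h2, heq]
  have heq : (fun s => X s / ∑ t, X t) = fun s => (∑ t, X t)⁻¹ * X s := by
    funext s; rw [div_eq_inv_mul]
  rw [heq]
  exact GTS.gSat_smul_iff I (sem A I) hA φ (∑ t, X t)⁻¹ (inv_pos.mpr hpos) X hX
end
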